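/- Let P ⊆ ℝ^d be a full-dimensional lattice polytope with codegree a satisfying P = ⌊aP⌋ + {P}. Then ⌊aP⌋ = {x ∈ ℝ^d : n_F(x) ≥ 1 − a·h_F for all facets F of P} and {P} = {x ∈ ℝ^d : n_F(x) ≥ (a−1)·h_F − 1 for all facets F of P}; in particular, the two polyhedra on the right-hand sides are lattice polytopes. -/

import Mathlib

open Set Pointwise

/-- The set of lattice points of `ℝ^d`. -/
def latticePoints (d : ℕ) : Set (Fin d → ℝ) :=
  {x | ∀ i, ∃ z : ℤ, x i = (z : ℝ)}

/-- A lattice polytope: the convex hull of a finite set of lattice points. -/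
def IsLatticePolytope {d : ℕ} (P : Set (Fin d → ℝ)) : Prop :=
  ∃ V : Finset (Fin d → ℝ), (V : Set (Fin d → ℝ)) ⊆ latticePoints d ∧
    P = convexHull ℝ (V : Set (Fin d → ℝ))

/-- The natural pairing of an integral linear functional with a point of `ℝ^d`. -/
def pairing {d : ℕ} (n : Fin d → ℤ) (x : Fin d → ℝ) : ℝ :=
  ∑ i, (n i : ℝ) * x i

/-- `P = {x | n_F(x) ≥ -h_F}` is an irredundant presentation with primitive
integral inner normals, i.e. the facet presentation of `P`. -/
def IsFacetPresentation {d m : ℕ} (P : Set (Fin d → ℝ))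
    (n : Fin m → Fin d → ℤ) (h : Fin m → ℤ) : Prop :=
  P = {x | ∀ i, pairing (n i) x ≥ -(h i : ℝ)} ∧
  (∀ i, Finset.univ.gcd (n i) = 1) ∧
  (∀ i, ∃ x : Fin d → ℝ, pairing (n i) x < -(h i : ℝ) ∧
    ∀ j, j ≠ i → pairing (n j) x ≥ -(h j : ℝ))

/-- `a` is the codegree of `P`: the least `k ≥ 1` such that `int(kP)` contains
a lattice point. -/
def IsCodegree {d : ℕ} (P : Set (Fin d → ℝ)) (a : ℕ) : Prop :=
  1 ≤ a ∧ (interior ((a : ℝ) • P) ∩ latticePoints d).Nonempty ∧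
    ∀ k : ℕ, 1 ≤ k → (interior ((k : ℝ) • P) ∩ latticePoints d).Nonempty → a ≤ k

/-- The floor polytope `⌊R⌋ = conv(int(R) ∩ ℤ^d)`. -/
def floorPoly {d : ℕ} (R : Set (Fin d → ℝ)) : Set (Fin d → ℝ) :=
  convexHull ℝ (interior R ∩ latticePoints d)

/-- The remainder polytope `{P} = conv{x ∈ ℤ^d | n_F(x) ≥ (a-1)h_F - 1}`,
defined in terms of the facet presentation data and the codegree `a`. -/
def remPoly {d m : ℕ} (n : Fin m → Fin d → ℤ) (h : Fin m → ℤ) (a : ℕ) :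
    Set (Fin d → ℝ) :=
  convexHull ℝ {x | x ∈ latticePoints d ∧
    ∀ i, pairing (n i) x ≥ ((a : ℝ) - 1) * (h i : ℝ) - 1}

/-- The cone `C_P ⊆ ℝ^d × ℝ` over `P`, in terms of the facet presentation. -/
def coneOver {d m : ℕ} (n : Fin m → Fin d → ℤ) (h : Fin m → ℤ) :
    Set ((Fin d → ℝ) × ℝ) :=
  {p | ∀ i, pairing (n i) p.1 ≥ -(p.2 * (h i : ℝ))}

/-- The interior `int(C_P)` of the cone over `P`. -/
def intCone {d m : ℕ} (n : Fin m → Fin d → ℤ) (h : Fin m → ℤ) :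
    Set ((Fin d → ℝ) × ℝ) :=
  {p | ∀ i, pairing (n i) p.1 > -(p.2 * (h i : ℝ))}

/-- The anticanonical set `ant(C_P)` of the cone over `P`. -/
def antCone {d m : ℕ} (n : Fin m → Fin d → ℤ) (h : Fin m → ℤ) :
    Set ((Fin d → ℝ) × ℝ) :=
  {p | ∀ i, pairing (n i) p.1 ≥ -(p.2 * (h i : ℝ)) - 1}

/-- Lattice points of `ℝ^d × ℝ = ℝ^{d+1}`. -/
def latticePairs (d : ℕ) : Set ((Fin d → ℝ) × ℝ) :=
  {p | p.1 ∈ latticePoints d ∧ ∃ z : ℤ, p.2 = (z : ℝ)}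

/-- The nearly Gorenstein condition with respect to a given facet presentation:
`(C_P ∩ ℤ^{d+1}) \ {0} ⊆ (int(C_P) ∩ ℤ^{d+1}) + (ant(C_P) ∩ ℤ^{d+1})`. -/
def NGIncl {d m : ℕ} (n : Fin m → Fin d → ℤ) (h : Fin m → ℤ) : Prop :=
  (coneOver n h ∩ latticePairs d) \ {(0 : (Fin d → ℝ) × ℝ)} ⊆
    (intCone n h ∩ latticePairs d) + (antCone n h ∩ latticePairs d)

/-- A full-dimensional lattice polytope is nearly Gorenstein if the nearly
Gorenstein inclusion holds for its facet presentation. -/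
def NearlyGorenstein {d : ℕ} (P : Set (Fin d → ℝ)) : Prop :=
  ∃ (m : ℕ) (n : Fin m → Fin d → ℤ) (h : Fin m → ℤ),
    IsFacetPresentation P n h ∧ NGIncl n h

/-- The polar dual `Q* = {y | y(x) ≥ -1 for all x ∈ Q}`. -/
def polarDual {d : ℕ} (Q : Set (Fin d → ℝ)) : Set (Fin d → ℝ) :=
  {y | ∀ x ∈ Q, (∑ i, y i * x i) ≥ -1}

/-- A reflexive polytope: a lattice polytope with `0` in its interior whose
polar dual is again a lattice polytope. -/
def IsReflexive {d : ℕ} (Q : Set (Fin d → ℝ)) : Prop :=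
  IsLatticePolytope Q ∧ (0 : Fin d → ℝ) ∈ interior Q ∧
    IsLatticePolytope (polarDual Q)

/-- A Gorenstein polytope: some dilate `kP`, translated by a lattice vector,
is reflexive. -/
def IsGorenstein {d : ℕ} (P : Set (Fin d → ℝ)) : Prop :=
  ∃ (k : ℕ) (w : Fin d → ℝ), 1 ≤ k ∧ w ∈ latticePoints d ∧
    IsReflexive ((fun x => x - w) '' ((k : ℝ) • P))

/-- The integer decomposition property. -/
def IsIDP {d : ℕ} (P : Set (Fin d → ℝ)) : Prop :=
  ∀ k : ℕ, 1 ≤ k → ∀ x ∈ ((k : ℝ) • P) ∩ latticePoints d,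
    ∃ y : Fin k → Fin d → ℝ, (∀ j, y j ∈ P ∩ latticePoints d) ∧ x = ∑ j, y j

/-- Minkowski indecomposability of a lattice polytope. -/
def IsIndecomposable {d : ℕ} (P : Set (Fin d → ℝ)) : Prop :=
  (¬ ∃ p : Fin d → ℝ, P = {p}) ∧
  ∀ P₁ P₂ : Set (Fin d → ℝ), IsLatticePolytope P₁ → IsLatticePolytope P₂ →
    P = P₁ + P₂ → (∃ p, P₁ = {p}) ∨ (∃ p, P₂ = {p})

/-- A `(0,1)`-polytope: the convex hull of a set of `(0,1)`-vectors. -/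
def Is01Polytope {d : ℕ} (P : Set (Fin d → ℝ)) : Prop :=
  ∃ V : Finset (Fin d → ℝ), (∀ v ∈ V, ∀ i, v i = 0 ∨ v i = 1) ∧
    P = convexHull ℝ (V : Set (Fin d → ℝ))

/-!
Write `A` and `B` for the two polyhedra of the statement. A lattice point in the interior of
`aP = {n_F ≥ -a h_F}` has integral values `n_F(x) > -a h_F`, hence `n_F(x) ≥ 1 - a h_F`; so
`⌊aP⌋ ⊆ A`, and `{P} ⊆ B` by definition. Moreover `A + B ⊆ P = ⌊aP⌋ + {P}` because the right-hand
sides add up to `-h_F`. Compact convex Minkowski summands cancel (separate a point from the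
summand by a hyperplane), so `A + {P} ⊆ ⌊aP⌋ + {P}` gives `A ⊆ ⌊aP⌋`, and likewise `B ⊆ {P}`.
-/

section Cancel

variable {E : Type*} [NormedAddCommGroup E]

lemma Bornology.IsBounded.of_add_left {s t : Set E} (hs : s.Nonempty)
    (h : Bornology.IsBounded (s + t)) : Bornology.IsBounded t := by
  obtain ⟨x, hx⟩ := hs
  refine (h.vadd (-x)).subset fun y hy => ⟨x + y, add_mem_add hx hy, ?_⟩
  simp

variable [NormedSpace ℝ E]

lemma mem_of_vadd_subset_add {B C : Set E} {x : E} (hB : Convex ℝ B) (hBc : IsClosed B)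
    (hC : C.Nonempty) (hCb : Bornology.IsBounded C) (hx : x +ᵥ C ⊆ B + C) : x ∈ B := by
  by_contra hxB
  obtain ⟨f, u, hfx, hfB⟩ := geometric_hahn_banach_point_closed hB hBc hxB
  have hbdd : BddBelow (f '' C) := (f.lipschitz.isBounded_image hCb).bddBelow
  -- `c` almost minimises `f` on `C`, so writing `x + c = b + c'` forces `f b < u`.
  obtain ⟨c, hc, hfc⟩ : ∃ c ∈ C, f c < sInf (f '' C) + (u - f x) := by
    obtain ⟨_, ⟨c, hc, rfl⟩, h⟩ :=
      exists_lt_of_csInf_lt (hC.image f) (lt_add_of_pos_right _ (sub_pos.2 hfx))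
    exact ⟨c, hc, h⟩
  obtain ⟨b, hb, c', hc', hbc⟩ := hx (vadd_mem_vadd_set hc)
  have hfc' : sInf (f '' C) ≤ f c' := csInf_le hbdd (mem_image_of_mem f hc')
  have hsum : f b + f c' = f x + f c := by
    rw [← map_add, ← map_add]
    exact congrArg f hbc
  linarith [hfB b hb]

lemma subset_of_add_subset_add {A B C : Set E} (hB : Convex ℝ B) (hBc : IsClosed B)
    (hC : C.Nonempty) (hCb : Bornology.IsBounded C) (h : A + C ⊆ B + C) : A ⊆ B := fun x hx =>
  mem_of_vadd_subset_add hB hBc hC hCb <| by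
    rintro _ ⟨c, hc, rfl⟩
    exact h (add_mem_add hx hc)

lemma eq_and_eq_of_add_subset_add {Q₁ Q₂ A B : Set E}
    (hQ₁ : IsCompact Q₁) (hQ₁c : Convex ℝ Q₁) (hQ₁n : Q₁.Nonempty)
    (hQ₂ : IsCompact Q₂) (hQ₂c : Convex ℝ Q₂) (hQ₂n : Q₂.Nonempty)
    (hA : Q₁ ⊆ A) (hB : Q₂ ⊆ B) (hAB : A + B ⊆ Q₁ + Q₂) : Q₁ = A ∧ Q₂ = B := by
  refine ⟨hA.antisymm ?_, hB.antisymm ?_⟩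
  · exact subset_of_add_subset_add hQ₁c hQ₁.isClosed hQ₂n hQ₂.isBounded
      ((add_subset_add_left hB).trans hAB)
  · refine subset_of_add_subset_add hQ₂c hQ₂.isClosed hQ₁n hQ₁.isBounded ?_
    rw [add_comm B, add_comm Q₂]
    exact (add_subset_add_right hA).trans hAB

end Cancel

section Lattice

variable {d : ℕ}

lemma Set.Finite.of_subset_latticePoints {S : Set (Fin d → ℝ)} (hS : S ⊆ latticePoints d)
    (hb : Bornology.IsBounded S) : S.Finite := by
  let ι : (Fin d → ℤ) → Fin d → ℝ := fun z i => z i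
  have hι : Isometry ι := Isometry.piMap (fun _ => ((↑) : ℤ → ℝ)) fun _ => Real.isometry_intCast
  have hSι : S ⊆ ι '' (ι ⁻¹' S) := fun x hx => by
    choose z hz using hS hx
    exact ⟨z, by simpa [ι, ← funext hz] using hx, funext fun i => (hz i).symm⟩
  exact (((hι.antilipschitz.isBounded_preimage hb).isCompact_closure.finite_of_discrete.subset
    subset_closure).image ι).subset hSι

lemma isLatticePolytope_convexHull {S : Set (Fin d → ℝ)} (hS : S ⊆ latticePoints d)
    (hfin : S.Finite) : IsLatticePolytope (convexHull ℝ S) :=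
  ⟨hfin.toFinset, by simpa using hS, by simp⟩

lemma IsLatticePolytope.isCompact {P : Set (Fin d → ℝ)} (hP : IsLatticePolytope P) :
    IsCompact P := by
  obtain ⟨V, -, rfl⟩ := hP
  exact V.finite_toSet.isCompact_convexHull ℝ

lemma IsLatticePolytope.convex {P : Set (Fin d → ℝ)} (hP : IsLatticePolytope P) :
    Convex ℝ P := by
  obtain ⟨V, -, rfl⟩ := hP
  exact convex_convexHull ℝ _

lemma isLatticePolytope_floorPoly {R : Set (Fin d → ℝ)} (hR : Bornology.IsBounded R) :
    IsLatticePolytope (floorPoly R) :=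
  isLatticePolytope_convexHull inter_subset_right <| .of_subset_latticePoints inter_subset_right
    (hR.subset (inter_subset_left.trans interior_subset))

lemma isLatticePolytope_remPoly {m : ℕ} {n : Fin m → Fin d → ℤ} {h : Fin m → ℤ} {a : ℕ}
    (hb : Bornology.IsBounded (remPoly n h a)) : IsLatticePolytope (remPoly n h a) :=
  isLatticePolytope_convexHull (fun _ hx => hx.1) <| .of_subset_latticePoints (fun _ hx => hx.1)
    (hb.subset (subset_convexHull ℝ _))

end Lattice

section Pairing

variable {d : ℕ}

def pairingLinear (n : Fin d → ℤ) : (Fin d → ℝ) →ₗ[ℝ] ℝ where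
  toFun := pairing n
  map_add' x y := by simp [pairing, mul_add, Finset.sum_add_distrib]
  map_smul' r x := by simp [pairing, Finset.mul_sum, mul_left_comm]

lemma pairing_add (n : Fin d → ℤ) (x y : Fin d → ℝ) :
    pairing n (x + y) = pairing n x + pairing n y :=
  (pairingLinear n).map_add x y

lemma pairing_smul (n : Fin d → ℤ) (r : ℝ) (x : Fin d → ℝ) :
    pairing n (r • x) = r * pairing n x :=
  (pairingLinear n).map_smul r x

lemma exists_pairing_eq_intCast (n : Fin d → ℤ) {x : Fin d → ℝ} (hx : x ∈ latticePoints d) :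
    ∃ w : ℤ, pairing n x = w := by
  choose z hz using hx
  exact ⟨∑ i, n i * z i, by simp [pairing, hz]⟩

lemma interior_setOf_le_pairing {n : Fin d → ℤ} (hn : n ≠ 0) (c : ℝ) :
    interior {x | c ≤ pairing n x} = {x | c < pairing n x} := by
  have hne : pairingLinear n ≠ 0 := fun h0 => by
    obtain ⟨j, hj⟩ := Function.ne_iff.mp hn
    have hj0 : pairing n (Pi.single j 1) = 0 := LinearMap.congr_fun h0 (Pi.single j 1)
    exact hj (by simpa [pairing, Pi.single_apply] using hj0)
  have hopen := (pairingLinear n).isOpenMap_of_finiteDimensional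
    (LinearMap.surjective_of_ne_zero hne)
  have hint := hopen.preimage_interior_eq_interior_preimage
    (pairingLinear n).continuous_of_finiteDimensional (Ici c)
  rw [interior_Ici] at hint
  exact hint.symm

end Pairing

lemma ne_zero_of_finset_gcd_eq_one {ι : Type*} {s : Finset ι} {v : ι → ℤ} (hv : s.gcd v = 1) :
    v ≠ 0 := by
  rintro rfl
  have h0 : s.gcd (0 : ι → ℤ) = 0 := Finset.gcd_eq_zero_iff.mpr fun _ _ => rfl
  exact zero_ne_one (h0.symm.trans hv)

section Polyhedron

variable {d m : ℕ}

def polyhedron (n : Fin m → Fin d → ℤ) (c : Fin m → ℝ) : Set (Fin d → ℝ) :=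
  {x | ∀ i, pairing (n i) x ≥ c i}

variable (n : Fin m → Fin d → ℤ)

lemma convex_polyhedron (c : Fin m → ℝ) : Convex ℝ (polyhedron n c) := by
  simp only [polyhedron, ge_iff_le, ofPred_forall]
  exact convex_iInter fun i => convex_halfSpace_ge (pairingLinear (n i)).isLinear (c i)

lemma smul_polyhedron {r : ℝ} (hr : 0 < r) (c : Fin m → ℝ) :
    r • polyhedron n c = polyhedron n (r • c) := by
  ext x
  simp [mem_smul_set_iff_inv_smul_mem₀ hr.ne', polyhedron, pairing_smul, le_inv_mul_iff₀ hr]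

lemma add_polyhedron_subset (c c' : Fin m → ℝ) :
    polyhedron n c + polyhedron n c' ⊆ polyhedron n (c + c') := by
  rintro _ ⟨x, hx, y, hy, rfl⟩ i
  simpa [pairing_add] using add_le_add (hx i) (hy i)

lemma remPoly_subset_polyhedron (h : Fin m → ℤ) (a : ℕ) :
    remPoly n h a ⊆ polyhedron n fun i => ((a : ℝ) - 1) * h i - 1 :=
  convexHull_min (fun _ hx => hx.2) (convex_polyhedron n _)

variable {n}

lemma lt_pairing_of_mem_interior_polyhedron (hn : ∀ i, n i ≠ 0) {c : Fin m → ℝ}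
    {x : Fin d → ℝ} (hx : x ∈ interior (polyhedron n c)) (i : Fin m) : c i < pairing (n i) x := by
  have hsub : polyhedron n c ⊆ {y | c i ≤ pairing (n i) y} := fun y hy => hy i
  simpa [interior_setOf_le_pairing (hn i)] using interior_mono hsub hx

lemma floorPoly_polyhedron_subset (hn : ∀ i, n i ≠ 0) (k : Fin m → ℤ) :
    floorPoly (polyhedron n fun i => (k i : ℝ)) ⊆ polyhedron n fun i => (k i : ℝ) + 1 := by
  refine convexHull_min (fun x ⟨hx, hxl⟩ i => ?_) (convex_polyhedron n _)
  obtain ⟨w, hw⟩ := exists_pairing_eq_intCast (n i) hxl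
  have hlt : (k i : ℝ) < w := hw ▸ lt_pairing_of_mem_interior_polyhedron hn hx i
  show (k i : ℝ) + 1 ≤ pairing (n i) x
  rw [hw]
  exact_mod_cast Int.add_one_le_of_lt (Int.cast_lt.mp hlt)

end Polyhedron

theorem stmt_7_general {d : ℕ} (P : Set (Fin d → ℝ))
    (hP : IsLatticePolytope P)
    {m : ℕ} (n : Fin m → Fin d → ℤ) (h : Fin m → ℤ)
    (hpres : IsFacetPresentation P n h)
    (a : ℕ) (ha : IsCodegree P a)
    (hdecomp : P = floorPoly ((a : ℝ) • P) + remPoly n h a) :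
    floorPoly ((a : ℝ) • P) =
      {x : Fin d → ℝ | ∀ i, pairing (n i) x ≥ 1 - (a : ℝ) * (h i : ℝ)} ∧
    remPoly n h a =
      {x : Fin d → ℝ | ∀ i, pairing (n i) x ≥ ((a : ℝ) - 1) * (h i : ℝ) - 1} ∧
    IsLatticePolytope
      {x : Fin d → ℝ | ∀ i, pairing (n i) x ≥ 1 - (a : ℝ) * (h i : ℝ)} ∧
    IsLatticePolytope
      {x : Fin d → ℝ | ∀ i, pairing (n i) x ≥ ((a : ℝ) - 1) * (h i : ℝ) - 1} := by
  obtain ⟨hPdesc, hprim, -⟩ := hpres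
  change P = polyhedron n fun i => -(h i : ℝ) at hPdesc
  obtain ⟨ha₁, hint, -⟩ := ha
  have haP : (a : ℝ) • P = polyhedron n fun i => ((-(a * h i) : ℤ) : ℝ) := by
    rw [hPdesc, smul_polyhedron n (Nat.cast_pos.mpr ha₁)]
    congr 1
    ext i
    simp
  have hfloor := isLatticePolytope_floorPoly (hP.isCompact.smul (a : ℝ)).isBounded
  have hfloorNe : (floorPoly ((a : ℝ) • P)).Nonempty := hint.mono (subset_convexHull ℝ _)
  have hPNe : P.Nonempty :=
    smul_set_nonempty.mp (hint.mono (inter_subset_left.trans interior_subset))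
  have hremNe : (remPoly n h a).Nonempty := (add_nonempty.mp (hdecomp ▸ hPNe)).2
  have hrem :=
    isLatticePolytope_remPoly ((hdecomp ▸ hP.isCompact.isBounded).of_add_left hfloorNe)
  have hfloorSub : floorPoly ((a : ℝ) • P) ⊆ polyhedron n fun i => 1 - (a : ℝ) * h i := by
    convert haP ▸ floorPoly_polyhedron_subset
      (fun i => ne_zero_of_finset_gcd_eq_one (hprim i)) _ using 3
    push_cast
    ring
  have hsum : (polyhedron n fun i => 1 - (a : ℝ) * h i) +
      (polyhedron n fun i => ((a : ℝ) - 1) * h i - 1) ⊆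
      floorPoly ((a : ℝ) • P) + remPoly n h a := by
    rw [← hdecomp, hPdesc]
    convert add_polyhedron_subset n _ _ using 2
    ext i
    simp only [Pi.add_apply]
    ring
  obtain ⟨hfloorEq, hremEq⟩ := eq_and_eq_of_add_subset_add hfloor.isCompact hfloor.convex
    hfloorNe hrem.isCompact hrem.convex hremNe hfloorSub (remPoly_subset_polyhedron n h a) hsum
  exact ⟨hfloorEq, hremEq, (hfloorEq ▸ hfloor :), (hremEq ▸ hrem :)⟩

theorem stmt_7 {d : ℕ} (hd : 1 ≤ d) (P : Set (Fin d → ℝ))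
    (hP : IsLatticePolytope P) (hfull : (interior P).Nonempty)
    {m : ℕ} (n : Fin m → Fin d → ℤ) (h : Fin m → ℤ)
    (hpres : IsFacetPresentation P n h)
    (a : ℕ) (ha : IsCodegree P a)
    (hdecomp : P = floorPoly ((a : ℝ) • P) + remPoly n h a) :
    floorPoly ((a : ℝ) • P) =
      {x : Fin d → ℝ | ∀ i, pairing (n i) x ≥ 1 - (a : ℝ) * (h i : ℝ)} ∧
    remPoly n h a =
      {x : Fin d → ℝ | ∀ i, pairing (n i) x ≥ ((a : ℝ) - 1) * (h i : ℝ) - 1} ∧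
    IsLatticePolytope
      {x : Fin d → ℝ | ∀ i, pairing (n i) x ≥ 1 - (a : ℝ) * (h i : ℝ)} ∧
    IsLatticePolytope
      {x : Fin d → ℝ | ∀ i, pairing (n i) x ≥ ((a : ℝ) - 1) * (h i : ℝ) - 1} :=
  stmt_7_general P hP n h hpres a ha hdecomp
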